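/- Assume d^* < ∞, C₀ := sup_k (1/d_k) ∫_{Δ_k} |q(x)| dx < ∞ and C₁ := sup_k |β_k|^{−1} / min{d_k, d_{k+1}} < ∞. Then the potential and jump forms are infinitesimally form bounded with respect to the broken Dirichlet form: for every ε > 0 there exists C(ε) > 0 such that every piecewise H¹ function f with Σ_k ∫_{Δ_k}(|f'(x)|² + |f(x)|²) dx < ∞ satisfies ∫₀^∞ |q(x)| |f(x)|² dx + Σ_k |f(x_k+) − f(x_k−)|² / |β_k| ≤ ε · Σ_k ∫_{Δ_k}(|f'(x)|² + |f(x)|²) dx + C(ε) ∫₀^∞ |f(x)|² dx. -/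

import Mathlib

/-!
On an interval of length `d` and for every `0 < δ ≤ d`, a primitive `P` of an `L²` function
`g` satisfies `P(t)² ≤ 2δ ∫ g² + (2/δ) ∫ P²`: compare `P(t)` with `P` on a subinterval of
length `δ` next to `t` (Cauchy–Schwarz) and average. With `δ = min(d_k, η)`, multiplying by
`d_k` bounds `∫_{Δ_k} |q| |f|² ≤ C₀ d_k sup_{Δ_k} |f|²`, and multiplying by
`min(d_k, d_{k+1})` bounds the jump term at `x_k` by the two adjacent intervals. Summing over
`k`, both forms are at most `(C₀ + 4C₁) (2D η ‖f'‖² + 2(1 + D/η) ‖f‖²)`; then choose `η` small.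
-/

open MeasureTheory Set Filter

noncomputable section

/-- A function that is *piecewise `H¹`* with respect to the partition points
`x 0 < x 1 < x 2 < ⋯` of `[0,∞)`: on each interval `Δ_{k+1} = [x k, x (k+1)]` it is
absolutely continuous with derivative `f' ∈ L²`, encoded via the fundamental
theorem of calculus; `fr k = f(x k +)` and `fl (k+1) = f(x (k+1) −)` are the
one-sided limits at the nodes. -/
structure PW1 (x : ℕ → ℝ) where
  f : ℝ → ℝ
  f' : ℝ → ℝ
  fr : ℕ → ℝ
  fl : ℕ → ℝ
  int_d : ∀ k, IntegrableOn f' (Icc (x k) (x (k + 1))) volume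
  sq_d : ∀ k, IntegrableOn (fun t => f' t ^ 2) (Icc (x k) (x (k + 1))) volume
  ftc : ∀ k, ∀ t ∈ Ioo (x k) (x (k + 1)), f t = fr k + ∫ s in Ioc (x k) t, f' s
  fl_eq : ∀ k, fl (k + 1) = fr k + ∫ s in Ioc (x k) (x (k + 1)), f' s

/-- The jump `f(x_{k+1}+) − f(x_{k+1}−)` of a piecewise `H¹` function at the
interior node `x (k+1)` (the paper's node `x_{k+1}`). -/
def PW1.jump {x : ℕ → ℝ} (F : PW1 x) (k : ℕ) : ℝ := F.fr (k + 1) - F.fl (k + 1)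

/-- Membership in the domain of the form `t_{X,β,q}`: `f ∈ L²(0,∞)`,
`∫₀^∞ |f'|² < ∞`, `∫₀^∞ |q| |f|² < ∞` and `Σ_k |f(x_k+) − f(x_k−)|²/|β_k| < ∞`. -/
def MemDom (x : ℕ → ℝ) (q : ℝ → ℝ) (β : ℕ → ℝ) (F : PW1 x) : Prop :=
  IntegrableOn (fun t => F.f t ^ 2) (Ioi 0) volume ∧
  IntegrableOn (fun t => F.f' t ^ 2) (Ioi 0) volume ∧
  IntegrableOn (fun t => |q t| * F.f t ^ 2) (Ioi 0) volume ∧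
  Summable (fun k => F.jump k ^ 2 / |β (k + 1)|)

/-- The value of the quadratic form
`t_{X,β,q}[f] = ∫₀^∞ (|f'|² + q |f|²) dx + Σ_k |f(x_k+) − f(x_k−)|²/β_k`. -/
def formVal (x : ℕ → ℝ) (q : ℝ → ℝ) (β : ℕ → ℝ) (F : PW1 x) : ℝ :=
  (∫ t in Ioi (0 : ℝ), (F.f' t ^ 2 + q t * F.f t ^ 2)) +
    ∑' k, F.jump k ^ 2 / β (k + 1)


open scoped Interval

theorem sq_integral_le_measureReal_univ_mul {α : Type*} [MeasurableSpace α] {μ : Measure α}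
    [IsFiniteMeasure μ] {g : α → ℝ} (hg : Integrable g μ)
    (hg2 : Integrable (fun a => g a ^ 2) μ) :
    (∫ a, g a ∂μ) ^ 2 ≤ μ.real univ * ∫ a, g a ^ 2 ∂μ := by
  rcases eq_zero_or_neZero μ with rfl | hμ
  · simp
  have hm : μ.real univ ≠ 0 := measureReal_univ_pos.ne'
  have jensen := (Even.convexOn_pow (n := 2) even_two).map_average_le
    (continuous_pow 2).continuousOn isClosed_univ (ae_of_all _ fun _ => mem_univ _) hg hg2
  simp only [average_eq, smul_eq_mul] at jensen
  calc (∫ a, g a ∂μ) ^ 2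
      = μ.real univ ^ 2 * ((μ.real univ)⁻¹ * ∫ a, g a ∂μ) ^ 2 := by field_simp
    _ ≤ μ.real univ ^ 2 * ((μ.real univ)⁻¹ * ∫ a, g a ^ 2 ∂μ) := by gcongr
    _ = μ.real univ * ∫ a, g a ^ 2 ∂μ := by field_simp

theorem sq_intervalIntegral_le {g : ℝ → ℝ} {a b s t : ℝ} (hg : IntegrableOn g (Icc a b))
    (hg2 : IntegrableOn (fun w => g w ^ 2) (Icc a b)) (hs : s ∈ Icc a b) (ht : t ∈ Icc a b) :
    (∫ w in s..t, g w) ^ 2 ≤ |t - s| * ∫ w in Icc a b, g w ^ 2 := by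
  have hst : Ι s t ⊆ Icc a b := uIoc_subset_uIcc.trans (uIcc_subset_Icc hs ht)
  have : Fact (volume (Ι s t) < ⊤) := ⟨by simp [Real.volume_uIoc]⟩
  have hCS := sq_integral_le_measureReal_univ_mul (hg.mono_set hst) (hg2.mono_set hst)
  rw [measureReal_restrict_apply_univ, measureReal_def, Real.volume_uIoc,
    ENNReal.toReal_ofReal (abs_nonneg _)] at hCS
  rw [← sq_abs, intervalIntegral.abs_integral_eq_abs_integral_uIoc, sq_abs]
  exact hCS.trans (mul_le_mul_of_nonneg_left
    (setIntegral_mono_set hg2 (ae_of_all _ fun _ => sq_nonneg _) hst.eventuallyLE) (abs_nonneg _))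

theorem integral_Ioc_sub_integral_Ioc {g : ℝ → ℝ} {a b s t : ℝ}
    (hg : IntegrableOn g (Icc a b)) (hs : s ∈ Icc a b) (ht : t ∈ Icc a b) :
    (∫ w in Ioc a t, g w) - ∫ w in Ioc a s, g w = ∫ w in s..t, g w := by
  have ha : a ∈ Icc a b := left_mem_Icc.2 (hs.1.trans hs.2)
  rw [← intervalIntegral.integral_of_le ht.1, ← intervalIntegral.integral_of_le hs.1]
  exact intervalIntegral.integral_interval_sub_left
    (hg.mono_set (uIcc_subset_Icc ha ht)).intervalIntegrable
    (hg.mono_set (uIcc_subset_Icc ha hs)).intervalIntegrable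

theorem sq_primitive_le {g : ℝ → ℝ} {a b δ t : ℝ} (c : ℝ) (hg : IntegrableOn g (Icc a b))
    (hg2 : IntegrableOn (fun s => g s ^ 2) (Icc a b)) (hδ : 0 < δ) (hδb : δ ≤ b - a)
    (ht : t ∈ Icc a b) :
    (c + ∫ w in Ioc a t, g w) ^ 2 ≤
      2 * δ * (∫ s in Icc a b, g s ^ 2) +
        2 / δ * ∫ s in Icc a b, (c + ∫ w in Ioc a s, g w) ^ 2 := by
  set P : ℝ → ℝ := fun s => c + ∫ w in Ioc a s, g w
  set G := ∫ s in Icc a b, g s ^ 2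
  -- `[u, u + δ] ⊆ [a, b]` has length `δ` and contains `t`; average over it.
  set u := min t (b - δ)
  have hJ : Icc u (u + δ) ⊆ Icc a b :=
    Icc_subset_Icc (le_min ht.1 (by linarith)) (by linarith [min_le_right t (b - δ)])
  have htJ : t ∈ Icc u (u + δ) := by
    refine ⟨min_le_left _ _, ?_⟩
    rcases le_total t (b - δ) with h | h
    · simp only [u, min_eq_left h]; linarith
    · simp only [u, min_eq_right h]; linarith [ht.2]
  have hdiff : ∀ s ∈ Icc u (u + δ), (P t - P s) ^ 2 ≤ δ * G := by
    intro s hs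
    rw [add_sub_add_left_eq_sub, integral_Ioc_sub_integral_Ioc hg (hJ hs) ht]
    refine (sq_intervalIntegral_le hg hg2 (hJ hs) ht).trans (mul_le_mul_of_nonneg_right ?_
      (setIntegral_nonneg measurableSet_Icc fun _ _ => sq_nonneg _))
    exact abs_sub_le_iff.2 ⟨by linarith [htJ.2, hs.1], by linarith [htJ.1, hs.2]⟩
  have hpt : ∀ s ∈ Icc u (u + δ), P t ^ 2 ≤ 2 * δ * G + 2 * P s ^ 2 := fun s hs => by
    nlinarith [sq_nonneg (P t - 2 * P s), hdiff s hs]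
  have hP2 : IntegrableOn (fun s => P s ^ 2) (Icc a b) :=
    ((continuousOn_const.add (intervalIntegral.continuousOn_primitive hg)).pow 2).integrableOn_Icc
  have hconst : IntegrableOn (fun _ => 2 * δ * G) (Icc u (u + δ)) := integrableOn_const (by simp)
  have havg := setIntegral_ge_of_const_le_real measurableSet_Icc (by simp) hpt
    (hconst.add ((hP2.mono_set hJ).const_mul 2))
  rw [integral_add hconst ((hP2.mono_set hJ).const_mul 2), setIntegral_const, integral_const_mul,
    Real.volume_real_Icc_of_le (by linarith), add_sub_cancel_left, smul_eq_mul] at havg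
  have hsub : ∫ s in Icc u (u + δ), P s ^ 2 ≤ ∫ s in Icc a b, P s ^ 2 :=
    setIntegral_mono_set hP2 (ae_of_all _ fun _ => sq_nonneg _) hJ.eventuallyLE
  refine le_of_mul_le_mul_right ?_ hδ
  calc P t ^ 2 * δ ≤ δ * (2 * δ * G) + 2 * ∫ s in Icc a b, P s ^ 2 := by linarith
    _ = (2 * δ * G + 2 / δ * ∫ s in Icc a b, P s ^ 2) * δ := by field_simp

theorem mul_sq_primitive_le {g : ℝ → ℝ} {a b D η m t : ℝ} (c : ℝ)
    (hg : IntegrableOn g (Icc a b)) (hg2 : IntegrableOn (fun s => g s ^ 2) (Icc a b))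
    (hab : a < b) (hbD : b - a ≤ D) (hη : 0 < η) (hm0 : 0 ≤ m) (hmb : m ≤ b - a)
    (ht : t ∈ Icc a b) :
    m * (c + ∫ w in Ioc a t, g w) ^ 2 ≤
      2 * (D * η) * (∫ s in Icc a b, g s ^ 2) +
        2 * (1 + D / η) * ∫ s in Icc a b, (c + ∫ w in Ioc a s, g w) ^ 2 := by
  set δ := min (b - a) η
  have hδ : 0 < δ := lt_min (sub_pos.2 hab) hη
  have hmδ : m * δ ≤ D * η :=
    mul_le_mul (hmb.trans hbD) (min_le_right _ _) hδ.le (by linarith)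
  have hmδ' : m / δ ≤ 1 + D / η := by
    rcases le_total (b - a) η with h | h
    · simp only [δ, min_eq_left h]
      have := div_le_one_of_le₀ hmb (sub_pos.2 hab).le
      have : 0 ≤ D / η := div_nonneg (by linarith) hη.le
      linarith
    · simp only [δ, min_eq_right h]
      have := div_le_div_of_nonneg_right (hmb.trans hbD) hη.le
      linarith
  have hG : 0 ≤ ∫ s in Icc a b, g s ^ 2 :=
    setIntegral_nonneg measurableSet_Icc fun _ _ => sq_nonneg _
  have hI : 0 ≤ ∫ s in Icc a b, (c + ∫ w in Ioc a s, g w) ^ 2 :=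
    setIntegral_nonneg measurableSet_Icc fun _ _ => sq_nonneg _
  calc m * (c + ∫ w in Ioc a t, g w) ^ 2
      ≤ m * (2 * δ * (∫ s in Icc a b, g s ^ 2) +
          2 / δ * ∫ s in Icc a b, (c + ∫ w in Ioc a s, g w) ^ 2) :=
        mul_le_mul_of_nonneg_left (sq_primitive_le c hg hg2 hδ (min_le_left _ _) ht) hm0
    _ = 2 * (m * δ) * (∫ s in Icc a b, g s ^ 2) +
          2 * (m / δ) * ∫ s in Icc a b, (c + ∫ w in Ioc a s, g w) ^ 2 := by ring
    _ ≤ _ := by gcongr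

theorem iUnion_Ioc_eq_Ioi_of_tendsto {x : ℕ → ℝ} (hmono : Monotone x)
    (hx : Tendsto x atTop atTop) : ⋃ k, Ioc (x k) (x (k + 1)) = Ioi (x 0) :=
  iUnion_Ioc_map_succ_eq_Ioi (fun k => hmono k.zero_le) (not_bddAbove_of_tendsto_atTop hx)

theorem integrableOn_Ioi_of_summable_integral_Ioo {x : ℕ → ℝ} {g : ℝ → ℝ}
    (hmono : Monotone x) (hx : Tendsto x atTop atTop) (hg0 : ∀ t, 0 ≤ g t)
    (hg : ∀ k, IntegrableOn g (Ioo (x k) (x (k + 1))))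
    (hsum : Summable fun k => ∫ t in Ioo (x k) (x (k + 1)), g t) :
    IntegrableOn g (Ioi (x 0)) := by
  rw [← iUnion_Ioc_eq_Ioi_of_tendsto hmono hx]
  refine integrableOn_iUnion_of_summable_integral_norm
    (fun k => (integrableOn_Ioc_iff_integrableOn_Ioo).2 (hg k)) ?_
  simpa only [Real.norm_of_nonneg (hg0 _), integral_Ioc_eq_integral_Ioo] using hsum

theorem hasSum_integral_Ioo {x : ℕ → ℝ} {g : ℝ → ℝ} (hmono : Monotone x)
    (hx : Tendsto x atTop atTop) (hg : IntegrableOn g (Ioi (x 0))) :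
    HasSum (fun k => ∫ t in Ioo (x k) (x (k + 1)), g t) (∫ t in Ioi (x 0), g t) := by
  rw [← iUnion_Ioc_eq_Ioi_of_tendsto hmono hx] at hg ⊢
  simpa only [integral_Ioc_eq_integral_Ioo, Nat.succ_eq_succ, Nat.succ_eq_add_one] using
    hasSum_integral_iUnion (fun _ => measurableSet_Ioc) hmono.pairwise_disjoint_on_Ioc_succ hg

theorem tsum_add_succ_le {e : ℕ → ℝ} (he : Summable e) (he0 : ∀ k, 0 ≤ e k) :
    ∑' k, (e k + e (k + 1)) ≤ 2 * ∑' k, e k := by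
  rw [he.tsum_add ((summable_nat_add_iff 1).2 he), he.tsum_eq_zero_add]
  linarith [he0 0]

theorem summable_and_tsum_add_tsum_le {a j L : ℕ → ℝ} {C₀ C₁ : ℝ} (hL : Summable L)
    (hL0 : ∀ k, 0 ≤ L k) (hC₁ : 0 ≤ C₁) (ha0 : ∀ k, 0 ≤ a k)
    (ha : ∀ k, a k ≤ C₀ * L k) (hj0 : ∀ k, 0 ≤ j k)
    (hj : ∀ k, j k ≤ C₁ * (L k + L (k + 1))) :
    Summable a ∧ Summable j ∧
      ∑' k, a k + ∑' k, j k ≤ (C₀ + 2 * C₁) * ∑' k, L k := by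
  have hLL : Summable fun k => L k + L (k + 1) := hL.add ((summable_nat_add_iff 1).2 hL)
  have hsa : Summable a := .of_nonneg_of_le ha0 ha (hL.mul_left C₀)
  have hsj : Summable j := .of_nonneg_of_le hj0 hj (hLL.mul_left C₁)
  refine ⟨hsa, hsj, ?_⟩
  calc ∑' k, a k + ∑' k, j k ≤ C₀ * ∑' k, L k + C₁ * ∑' k, (L k + L (k + 1)) := by
        rw [← tsum_mul_left, ← tsum_mul_left]
        exact add_le_add (hsa.tsum_le_tsum ha (hL.mul_left C₀))
          (hsj.tsum_le_tsum hj (hLL.mul_left C₁))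
    _ ≤ C₀ * ∑' k, L k + C₁ * (2 * ∑' k, L k) := by
        gcongr
        exact tsum_add_succ_le hL hL0
    _ = (C₀ + 2 * C₁) * ∑' k, L k := by ring

namespace PW1

variable {x : ℕ → ℝ} (F : PW1 x)

/-- The continuous representative of `F.f` on `[x k, x (k + 1)]`, with the one-sided limits as
its end values. -/
def piece (k : ℕ) (s : ℝ) : ℝ := F.fr k + ∫ w in Ioc (x k) s, F.f' w

theorem f_eq_piece (k : ℕ) : EqOn F.f (F.piece k) (Ioo (x k) (x (k + 1))) := F.ftc k

theorem fr_eq_piece (k : ℕ) : F.fr k = F.piece k (x k) := by simp [piece]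

theorem fl_succ_eq_piece (k : ℕ) : F.fl (k + 1) = F.piece k (x (k + 1)) := F.fl_eq k

theorem continuousOn_piece (k : ℕ) : ContinuousOn (F.piece k) (Icc (x k) (x (k + 1))) :=
  continuousOn_const.add (intervalIntegral.continuousOn_primitive (F.int_d k))

theorem integrableOn_f_sq (k : ℕ) :
    IntegrableOn (fun t => F.f t ^ 2) (Ioo (x k) (x (k + 1))) :=
  ((((F.continuousOn_piece k).pow 2).integrableOn_Icc.mono_set Ioo_subset_Icc_self).congr_fun
    (fun _ ht => by simp [F.f_eq_piece k ht]) measurableSet_Ioo)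

theorem integrableOn_abs_mul_f_sq {q : ℝ → ℝ} (k : ℕ)
    (hq : IntegrableOn q (Icc (x k) (x (k + 1)))) :
    IntegrableOn (fun t => |q t| * F.f t ^ 2) (Ioo (x k) (x (k + 1))) :=
  (((IntegrableOn.mul_continuousOn hq.abs ((F.continuousOn_piece k).pow 2) isCompact_Icc).mono_set
    Ioo_subset_Icc_self).congr_fun (fun _ ht => by simp [F.f_eq_piece k ht]) measurableSet_Ioo)

def localBound (D η : ℝ) (k : ℕ) : ℝ :=
  2 * (D * η) * (∫ t in Ioo (x k) (x (k + 1)), F.f' t ^ 2) +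
    2 * (1 + D / η) * ∫ t in Ioo (x k) (x (k + 1)), F.f t ^ 2

theorem localBound_nonneg {D η : ℝ} (hD : 0 ≤ D) (hη : 0 < η) (k : ℕ) :
    0 ≤ F.localBound D η k := by
  have hA := setIntegral_nonneg (μ := volume) (measurableSet_Ioo (a := x k) (b := x (k + 1)))
    fun t _ => sq_nonneg (F.f' t)
  have hB := setIntegral_nonneg (μ := volume) (measurableSet_Ioo (a := x k) (b := x (k + 1)))
    fun t _ => sq_nonneg (F.f t)
  unfold localBound
  positivity

theorem mul_piece_sq_le {D η m t : ℝ} {k : ℕ} (hk : x k < x (k + 1))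
    (hD : x (k + 1) - x k ≤ D) (hη : 0 < η) (hm0 : 0 ≤ m) (hm : m ≤ x (k + 1) - x k)
    (ht : t ∈ Icc (x k) (x (k + 1))) :
    m * F.piece k t ^ 2 ≤ F.localBound D η k := by
  have hB : ∫ s in Icc (x k) (x (k + 1)), (F.fr k + ∫ w in Ioc (x k) s, F.f' w) ^ 2 =
      ∫ s in Ioo (x k) (x (k + 1)), F.f s ^ 2 := by
    rw [integral_Icc_eq_integral_Ioo]
    exact setIntegral_congr_fun measurableSet_Ioo fun s hs =>
      congr_arg (· ^ 2) (F.f_eq_piece k hs).symm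
  have := mul_sq_primitive_le (F.fr k) (F.int_d k) (F.sq_d k) hk hD hη hm0 hm ht
  rwa [integral_Icc_eq_integral_Ioo, hB] at this

theorem integral_abs_mul_f_sq_le {q : ℝ → ℝ} {D η C₀ : ℝ} {k : ℕ}
    (hk : x k < x (k + 1)) (hD : x (k + 1) - x k ≤ D) (hη : 0 < η)
    (hq : IntegrableOn q (Icc (x k) (x (k + 1))))
    (hqk : ∫ t in Icc (x k) (x (k + 1)), |q t| ≤ C₀ * (x (k + 1) - x k)) :
    ∫ t in Ioo (x k) (x (k + 1)), |q t| * F.f t ^ 2 ≤ C₀ * F.localBound D η k := by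
  have hd : 0 < x (k + 1) - x k := sub_pos.2 hk
  have hL := F.localBound_nonneg (hd.le.trans hD) hη k
  refine le_of_mul_le_mul_left ?_ hd
  have hqa : IntegrableOn (fun t => |q t|) (Icc (x k) (x (k + 1))) := hq.abs
  calc (x (k + 1) - x k) * ∫ t in Ioo (x k) (x (k + 1)), |q t| * F.f t ^ 2
      = ∫ t in Ioo (x k) (x (k + 1)), (x (k + 1) - x k) * (|q t| * F.f t ^ 2) :=
        (integral_const_mul _ _).symm
    _ ≤ ∫ t in Ioo (x k) (x (k + 1)), F.localBound D η k * |q t| := by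
        refine setIntegral_mono_on ((F.integrableOn_abs_mul_f_sq k hq).const_mul _)
          ((hqa.mono_set Ioo_subset_Icc_self).const_mul _) measurableSet_Ioo fun t ht => ?_
        have := F.mul_piece_sq_le hk hD hη hd.le le_rfl (Ioo_subset_Icc_self ht)
        rw [F.f_eq_piece k ht, mul_left_comm, mul_comm _ |q t|]
        exact mul_le_mul_of_nonneg_left this (abs_nonneg _)
    _ = F.localBound D η k * ∫ t in Icc (x k) (x (k + 1)), |q t| := by
        rw [integral_const_mul, integral_Icc_eq_integral_Ioo]
    _ ≤ F.localBound D η k * (C₀ * (x (k + 1) - x k)) := mul_le_mul_of_nonneg_left hqk hL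
    _ = (x (k + 1) - x k) * (C₀ * F.localBound D η k) := by ring

theorem mul_jump_sq_le {D η m : ℝ} {k : ℕ} (hmono : StrictMono x)
    (hD : ∀ k, x (k + 1) - x k ≤ D) (hη : 0 < η) (hm0 : 0 ≤ m)
    (hm : m ≤ min (x (k + 1) - x k) (x (k + 2) - x (k + 1))) :
    m * F.jump k ^ 2 ≤ 2 * (F.localBound D η k + F.localBound D η (k + 1)) := by
  have hk : x k < x (k + 1) := hmono k.lt_succ_self
  have hk' : x (k + 1) < x (k + 2) := hmono (k + 1).lt_succ_self
  have hl := F.mul_piece_sq_le hk (hD k) hη hm0 (hm.trans (min_le_left _ _))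
    (right_mem_Icc.2 hk.le)
  have hr := F.mul_piece_sq_le hk' (hD (k + 1)) hη hm0 (hm.trans (min_le_right _ _))
    (left_mem_Icc.2 hk'.le)
  rw [jump, fr_eq_piece, fl_succ_eq_piece]
  nlinarith [mul_nonneg hm0 (sq_nonneg (F.piece (k + 1) (x (k + 1)) + F.piece k (x (k + 1))))]

theorem jump_sq_div_abs_le {β : ℕ → ℝ} {D η C₁ : ℝ} {k : ℕ} (hmono : StrictMono x)
    (hD : ∀ k, x (k + 1) - x k ≤ D) (hη : 0 < η) (hC₁ : 0 ≤ C₁)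
    (hb : |β (k + 1)|⁻¹ ≤ C₁ * min (x (k + 1) - x k) (x (k + 2) - x (k + 1))) :
    F.jump k ^ 2 / |β (k + 1)| ≤
      2 * C₁ * (F.localBound D η k + F.localBound D η (k + 1)) := by
  have hm0 : 0 ≤ min (x (k + 1) - x k) (x (k + 2) - x (k + 1)) :=
    le_min (sub_nonneg.2 (hmono k.lt_succ_self).le) (sub_nonneg.2 (hmono (k + 1).lt_succ_self).le)
  calc F.jump k ^ 2 / |β (k + 1)|
      ≤ F.jump k ^ 2 * (C₁ * min (x (k + 1) - x k) (x (k + 2) - x (k + 1))) :=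
        (div_eq_mul_inv _ _).trans_le (mul_le_mul_of_nonneg_left hb (sq_nonneg _))
    _ = C₁ * (min (x (k + 1) - x k) (x (k + 2) - x (k + 1)) * F.jump k ^ 2) := by ring
    _ ≤ C₁ * (2 * (F.localBound D η k + F.localBound D η (k + 1))) :=
        mul_le_mul_of_nonneg_left (F.mul_jump_sq_le hmono hD hη hm0 le_rfl) hC₁
    _ = 2 * C₁ * (F.localBound D η k + F.localBound D η (k + 1)) := by ring

theorem integral_energy_eq (k : ℕ) :
    ∫ t in Ioo (x k) (x (k + 1)), (F.f' t ^ 2 + F.f t ^ 2) =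
      (∫ t in Ioo (x k) (x (k + 1)), F.f' t ^ 2) + ∫ t in Ioo (x k) (x (k + 1)), F.f t ^ 2 :=
  integral_add ((F.sq_d k).mono_set Ioo_subset_Icc_self) (F.integrableOn_f_sq k)

theorem summable_integral_sq_of_summable (hsum : Summable fun k =>
      ∫ t in Ioo (x k) (x (k + 1)), (F.f' t ^ 2 + F.f t ^ 2)) :
    Summable (fun k => ∫ t in Ioo (x k) (x (k + 1)), F.f' t ^ 2) ∧
      Summable (fun k => ∫ t in Ioo (x k) (x (k + 1)), F.f t ^ 2) := by
  have hA0 : ∀ k, 0 ≤ ∫ t in Ioo (x k) (x (k + 1)), F.f' t ^ 2 := fun k =>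
    setIntegral_nonneg measurableSet_Ioo fun _ _ => sq_nonneg _
  have hB0 : ∀ k, 0 ≤ ∫ t in Ioo (x k) (x (k + 1)), F.f t ^ 2 := fun k =>
    setIntegral_nonneg measurableSet_Ioo fun _ _ => sq_nonneg _
  simp only [integral_energy_eq] at hsum
  exact ⟨.of_nonneg_of_le hA0 (fun k => le_add_of_nonneg_right (hB0 k)) hsum,
    .of_nonneg_of_le hB0 (fun k => le_add_of_nonneg_left (hA0 k)) hsum⟩

theorem potential_add_jump_le {q : ℝ → ℝ} {β : ℕ → ℝ} {D C₀ C₁ η : ℝ}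
    (hmono : StrictMono x) (hxtop : Tendsto x atTop atTop)
    (hq : ∀ k, IntegrableOn q (Icc (x k) (x (k + 1))))
    (hD : ∀ k, x (k + 1) - x k ≤ D)
    (hqk : ∀ k, ∫ t in Icc (x k) (x (k + 1)), |q t| ≤ C₀ * (x (k + 1) - x k))
    (hb : ∀ k, |β (k + 1)|⁻¹ ≤ C₁ * min (x (k + 1) - x k) (x (k + 2) - x (k + 1)))
    (hC₀ : 0 ≤ C₀) (hC₁ : 0 ≤ C₁) (hη : 0 < η)
    (hsum : Summable fun k => ∫ t in Ioo (x k) (x (k + 1)), (F.f' t ^ 2 + F.f t ^ 2)) :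
    IntegrableOn (fun t => |q t| * F.f t ^ 2) (Ioi (x 0)) ∧
      Summable (fun k => F.jump k ^ 2 / |β (k + 1)|) ∧
      (∫ t in Ioi (x 0), |q t| * F.f t ^ 2) + ∑' k, F.jump k ^ 2 / |β (k + 1)| ≤
        (C₀ + 4 * C₁) *
          (2 * (D * η) * (∑' k, ∫ t in Ioo (x k) (x (k + 1)), (F.f' t ^ 2 + F.f t ^ 2)) +
            2 * (1 + D / η) * ∫ t in Ioi (x 0), F.f t ^ 2) := by
  have hk : ∀ k, x k < x (k + 1) := fun k => hmono k.lt_succ_self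
  have hD0 : 0 ≤ D := (sub_pos.2 (hk 0)).le.trans (hD 0)
  obtain ⟨hA, hB⟩ := F.summable_integral_sq_of_summable hsum
  have hL : Summable (F.localBound D η) := (hA.mul_left _).add (hB.mul_left _)
  obtain ⟨hqs, hjs, hle⟩ := summable_and_tsum_add_tsum_le hL (F.localBound_nonneg hD0 hη)
    (by positivity : 0 ≤ 2 * C₁)
    (fun k => setIntegral_nonneg measurableSet_Ioo fun _ _ => by positivity)
    (fun k => F.integral_abs_mul_f_sq_le (hk k) (hD k) hη (hq k) (hqk k))
    (fun k => by positivity) (fun k => F.jump_sq_div_abs_le hmono hD hη hC₁ (hb k))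
  have hqI := integrableOn_Ioi_of_summable_integral_Ioo hmono.monotone hxtop
    (fun t => by positivity) (fun k => F.integrableOn_abs_mul_f_sq k (hq k)) hqs
  have hfI := integrableOn_Ioi_of_summable_integral_Ioo hmono.monotone hxtop
    (fun t => by positivity) F.integrableOn_f_sq hB
  refine ⟨hqI, hjs, ?_⟩
  have hAE : ∑' k, ∫ t in Ioo (x k) (x (k + 1)), F.f' t ^ 2 ≤
      ∑' k, ∫ t in Ioo (x k) (x (k + 1)), (F.f' t ^ 2 + F.f t ^ 2) :=
    hA.tsum_le_tsum (fun k => F.integral_energy_eq k ▸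
      le_add_of_nonneg_right (setIntegral_nonneg measurableSet_Ioo fun _ _ => sq_nonneg _)) hsum
  rw [← (hasSum_integral_Ioo hmono.monotone hxtop hqI).tsum_eq,
    ← (hasSum_integral_Ioo hmono.monotone hxtop hfI).tsum_eq]
  calc _ ≤ (C₀ + 2 * (2 * C₁)) * ∑' k, F.localBound D η k := hle
    _ = (C₀ + 4 * C₁) * (2 * (D * η) * (∑' k, ∫ t in Ioo (x k) (x (k + 1)), F.f' t ^ 2) +
          2 * (1 + D / η) * ∑' k, ∫ t in Ioo (x k) (x (k + 1)), F.f t ^ 2) := by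
        unfold localBound
        rw [(hA.mul_left _).tsum_add (hB.mul_left _), tsum_mul_left, tsum_mul_left]
        ring
    _ ≤ _ := by gcongr

end PW1

theorem stmt_18_general (x : ℕ → ℝ) (hx0 : x 0 = 0) (hmono : StrictMono x)
    (hxtop : Tendsto x atTop atTop)
    (q : ℝ → ℝ) (hq : ∀ a b : ℝ, 0 ≤ a → IntegrableOn q (Icc a b) volume)
    (β : ℕ → ℝ)
    (D : ℝ) (hD : ∀ k, x (k + 1) - x k ≤ D)
    (C₀ C₁ : ℝ)
    (habs : ∀ k, (1 / (x (k + 1) - x k)) *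
      (∫ t in Icc (x k) (x (k + 1)), |q t|) ≤ C₀)
    (hb : ∀ k, |β (k + 1)|⁻¹ ≤
      C₁ * min (x (k + 1) - x k) (x (k + 2) - x (k + 1))) :
    ∀ ε > 0, ∃ Cε > 0, ∀ F : PW1 x,
      Summable (fun k => ∫ t in Ioo (x k) (x (k + 1)), (F.f' t ^ 2 + F.f t ^ 2)) →
      (IntegrableOn (fun t => |q t| * F.f t ^ 2) (Ioi 0) volume ∧
        Summable (fun k => F.jump k ^ 2 / |β (k + 1)|) ∧
        (∫ t in Ioi (0 : ℝ), |q t| * F.f t ^ 2) +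
            (∑' k, F.jump k ^ 2 / |β (k + 1)|) ≤
          ε * (∑' k, ∫ t in Ioo (x k) (x (k + 1)), (F.f' t ^ 2 + F.f t ^ 2)) +
            Cε * ∫ t in Ioi (0 : ℝ), F.f t ^ 2) := by
  intro ε hε
  have hd : ∀ k, 0 < x (k + 1) - x k := fun k => sub_pos.2 (hmono k.lt_succ_self)
  have hqk : ∀ k, ∫ t in Icc (x k) (x (k + 1)), |q t| ≤ C₀ * (x (k + 1) - x k) :=
    fun k => by simpa only [one_div_mul_eq_div, div_le_iff₀ (hd k)] using habs k
  have hC₀ : 0 ≤ C₀ := nonneg_of_mul_nonneg_left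
    ((setIntegral_nonneg measurableSet_Icc fun _ _ => abs_nonneg _).trans (hqk 0)) (hd 0)
  have hC₁ : 0 ≤ C₁ := nonneg_of_mul_nonneg_left ((inv_nonneg.2 (abs_nonneg _)).trans (hb 0))
    (lt_min (hd 0) (hd 1))
  have hD0 : 0 ≤ D := (hd 0).le.trans (hD 0)
  set η := ε / ((C₀ + 4 * C₁) * (2 * D) + 1)
  have hη : 0 < η := by positivity
  have hεη : (C₀ + 4 * C₁) * (2 * (D * η)) ≤ ε := by
    rw [← mul_assoc, ← mul_assoc, mul_div_assoc', div_le_iff₀ (by positivity)]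
    nlinarith
  refine ⟨(C₀ + 4 * C₁) * (2 * (1 + D / η)) + 1, by positivity, fun F hsum => ?_⟩
  obtain ⟨hqI, hjs, hle⟩ := F.potential_add_jump_le hmono hxtop
    (fun k => hq _ _ (hx0 ▸ hmono.monotone k.zero_le)) hD hqk hb hC₀ hC₁ hη hsum
  rw [hx0] at hqI hle
  refine ⟨hqI, hjs, hle.trans ?_⟩
  have hE : 0 ≤ ∑' k, ∫ t in Ioo (x k) (x (k + 1)), (F.f' t ^ 2 + F.f t ^ 2) :=
    tsum_nonneg fun k => setIntegral_nonneg measurableSet_Ioo fun _ _ => by positivity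
  have hI : 0 ≤ ∫ t in Ioi (0 : ℝ), F.f t ^ 2 :=
    setIntegral_nonneg measurableSet_Ioi fun _ _ => sq_nonneg _
  nlinarith [mul_le_mul_of_nonneg_right hεη hE]

/-- **Lemma 2.4(i)**: if `d^* < ∞`, `sup_k (1/d_k)∫_Δₖ |q| = C₀ < ∞` and
`sup_k |β_k|⁻¹/min(d_k,d_{k+1}) = C₁ < ∞`, then the forms `q` and `b_X` are
infinitesimally form bounded with respect to the broken Dirichlet form. -/
theorem stmt_18 (x : ℕ → ℝ) (hx0 : x 0 = 0) (hmono : StrictMono x)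
    (hxtop : Tendsto x atTop atTop)
    (q : ℝ → ℝ) (hq : ∀ a b : ℝ, 0 ≤ a → IntegrableOn q (Icc a b) volume)
    (β : ℕ → ℝ) (hβ : ∀ k, β (k + 1) ≠ 0)
    (D : ℝ) (hD : ∀ k, x (k + 1) - x k ≤ D)
    (C₀ C₁ : ℝ)
    (habs : ∀ k, (1 / (x (k + 1) - x k)) *
      (∫ t in Icc (x k) (x (k + 1)), |q t|) ≤ C₀)
    (hb : ∀ k, |β (k + 1)|⁻¹ ≤
      C₁ * min (x (k + 1) - x k) (x (k + 2) - x (k + 1))) :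
    ∀ ε > 0, ∃ Cε > 0, ∀ F : PW1 x,
      Summable (fun k => ∫ t in Ioo (x k) (x (k + 1)), (F.f' t ^ 2 + F.f t ^ 2)) →
      (IntegrableOn (fun t => |q t| * F.f t ^ 2) (Ioi 0) volume ∧
        Summable (fun k => F.jump k ^ 2 / |β (k + 1)|) ∧
        (∫ t in Ioi (0 : ℝ), |q t| * F.f t ^ 2) +
            (∑' k, F.jump k ^ 2 / |β (k + 1)|) ≤
          ε * (∑' k, ∫ t in Ioo (x k) (x (k + 1)), (F.f' t ^ 2 + F.f t ^ 2)) +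
            Cε * ∫ t in Ioi (0 : ℝ), F.f t ^ 2) :=
  stmt_18_general x hx0 hmono hxtop q hq β D hD C₀ C₁ habs hb

end
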